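/- Let m = ⟨X,Y⟩ ⊂ ℂ[[X,Y]], let f ∈ m, and suppose m^k ⊆ m·J(f) + ⟨f⟩ for some k ≥ 1. Then for any g ∈ ℂ[[X,Y]] with g - f ∈ m^{k+1} one has m^k ⊆ m·J(g) + ⟨g⟩ (the determinacy hypothesis is stable under perturbation by m^{k+1}). -/

import Mathlib

/-!
A derivation lowers the `m`-adic order by at most one, so `g - f ∈ m^{k+1}` gives
`J(f) ≤ J(g) + m^k`. Hence `m^k ≤ m·J(f) + ⟨f⟩ ≤ m·J(g) + ⟨g⟩ + m·m^k`, and Nakayama's lemma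
(`m^k` is finitely generated and `m` lies in the Jacobson radical of the local ring `ℂ[[X,Y]]`)
removes the last summand.
-/

open MvPowerSeries

/-- Partial derivative of a formal power series in two variables. -/
noncomputable def pderivPS (i : Fin 2) (f : MvPowerSeries (Fin 2) ℂ) :
    MvPowerSeries (Fin 2) ℂ :=
  fun n => ((n i : ℂ) + 1) * coeff (n + Finsupp.single i 1) f

/-- Jacobian ideal of a formal power series in two variables. -/
noncomputable def jacobianIdeal (f : MvPowerSeries (Fin 2) ℂ) :
    Ideal (MvPowerSeries (Fin 2) ℂ) :=
  Ideal.span {pderivPS 0 f, pderivPS 1 f}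

theorem Derivation.map_mem_pow_of_mem_pow_succ {R A : Type*} [CommSemiring R] [CommSemiring A]
    [Algebra R A] (D : Derivation R A A) (I : Ideal A) :
    ∀ {n : ℕ} {x : A}, x ∈ I ^ (n + 1) → D x ∈ I ^ n
  | 0, _, _ => by simp
  | n + 1, x, hx => by
    rw [pow_succ'] at hx
    refine Submodule.mul_induction_on hx (fun a ha b hb => ?_) (fun a b ha hb => ?_)
    · rw [D.leibniz, smul_eq_mul, smul_eq_mul]
      refine add_mem ?_ (Ideal.mul_mem_right _ _ hb)
      rw [pow_succ']
      exact Ideal.mul_mem_mul ha (D.map_mem_pow_of_mem_pow_succ I hb)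
    · rw [map_add]
      exact add_mem ha hb

theorem MvPowerSeries.X_mem_maximalIdeal {σ R : Type*} [CommRing R] [IsLocalRing R] (i : σ) :
    (X i : MvPowerSeries σ R) ∈ IsLocalRing.maximalIdeal _ := by
  rw [IsLocalRing.mem_maximalIdeal, mem_nonunits_iff, isUnit_iff_constantCoeff,
    constantCoeff_X]
  exact not_isUnit_zero

theorem pderivPS_eq_pderiv (i : Fin 2) (f : MvPowerSeries (Fin 2) ℂ) :
    pderivPS i f = pderiv ℂ i f := by
  ext n
  rw [coeff_pderiv, mul_comm]
  rfl

theorem jacobianIdeal_le_sup_pow {I : Ideal (MvPowerSeries (Fin 2) ℂ)} {k : ℕ}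
    {f g : MvPowerSeries (Fin 2) ℂ} (hg : g - f ∈ I ^ (k + 1)) :
    jacobianIdeal f ≤ jacobianIdeal g ⊔ I ^ k := by
  have hpderiv (i : Fin 2) : pderivPS i f ∈ jacobianIdeal g ⊔ I ^ k := by
    have hi : pderivPS i g ∈ jacobianIdeal g :=
      Ideal.subset_span (by fin_cases i <;> simp)
    have hdiff := (pderiv ℂ i).map_mem_pow_of_mem_pow_succ I hg
    rw [map_sub, ← pderivPS_eq_pderiv, ← pderivPS_eq_pderiv] at hdiff
    simpa using sub_mem (Ideal.mem_sup_left hi) (Ideal.mem_sup_right hdiff)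
  rw [jacobianIdeal, Ideal.span_le, Set.insert_subset_iff, Set.singleton_subset_iff]
  exact ⟨hpderiv 0, hpderiv 1⟩

theorem determinacy_criterion_stable_general (k : ℕ)
    (f g : MvPowerSeries (Fin 2) ℂ)
    (hdet : (Ideal.span ({X 0, X 1} : Set (MvPowerSeries (Fin 2) ℂ))) ^ k ≤
      Ideal.span ({X 0, X 1} : Set (MvPowerSeries (Fin 2) ℂ)) * jacobianIdeal f ⊔
        Ideal.span ({f} : Set (MvPowerSeries (Fin 2) ℂ)))
    (hg : g - f ∈ (Ideal.span ({X 0, X 1} : Set (MvPowerSeries (Fin 2) ℂ))) ^ (k + 1)) :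
    (Ideal.span ({X 0, X 1} : Set (MvPowerSeries (Fin 2) ℂ))) ^ k ≤
      Ideal.span ({X 0, X 1} : Set (MvPowerSeries (Fin 2) ℂ)) * jacobianIdeal g ⊔
        Ideal.span ({g} : Set (MvPowerSeries (Fin 2) ℂ)) := by
  set m := Ideal.span ({X 0, X 1} : Set (MvPowerSeries (Fin 2) ℂ))
  have hm : m ≤ Ideal.jacobson ⊥ := by
    refine le_trans ?_ (IsLocalRing.maximalIdeal_le_jacobson _)
    rw [Ideal.span_le, Set.insert_subset_iff, Set.singleton_subset_iff]
    exact ⟨X_mem_maximalIdeal 0, X_mem_maximalIdeal 1⟩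
  have hf : Ideal.span {f} ≤ Ideal.span {g} ⊔ m ^ (k + 1) := by
    rw [Ideal.span_singleton_le_iff_mem]
    simpa using sub_mem (Ideal.mem_sup_left (Ideal.mem_span_singleton_self g))
      (Ideal.mem_sup_right hg)
  refine Submodule.le_of_le_smul_of_le_jacobson_bot ((Submodule.fg_span (Set.toFinite _)).pow k)
    hm ?_
  calc m ^ k ≤ m * jacobianIdeal f ⊔ Ideal.span {f} := hdet
    _ ≤ m * (jacobianIdeal g ⊔ m ^ k) ⊔ (Ideal.span {g} ⊔ m ^ (k + 1)) :=
      sup_le_sup (Ideal.mul_mono_right (jacobianIdeal_le_sup_pow hg)) hf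
    _ = m * jacobianIdeal g ⊔ Ideal.span {g} ⊔ m • m ^ k := by
      rw [Ideal.mul_sup, smul_eq_mul, ← pow_succ', sup_sup_sup_comm, sup_idem]

/-- Stability of the determinacy criterion: if `f ∈ m` satisfies
`m^k ⊆ m·J(f) + ⟨f⟩` and `g - f ∈ m^{k+1}`, then `m^k ⊆ m·J(g) + ⟨g⟩`. -/
theorem determinacy_criterion_stable (k : ℕ) (hk : 1 ≤ k)
    (f g : MvPowerSeries (Fin 2) ℂ)
    (hf : f ∈ Ideal.span ({X 0, X 1} : Set (MvPowerSeries (Fin 2) ℂ)))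
    (hdet : (Ideal.span ({X 0, X 1} : Set (MvPowerSeries (Fin 2) ℂ))) ^ k ≤
      Ideal.span ({X 0, X 1} : Set (MvPowerSeries (Fin 2) ℂ)) * jacobianIdeal f ⊔
        Ideal.span ({f} : Set (MvPowerSeries (Fin 2) ℂ)))
    (hg : g - f ∈ (Ideal.span ({X 0, X 1} : Set (MvPowerSeries (Fin 2) ℂ))) ^ (k + 1)) :
    (Ideal.span ({X 0, X 1} : Set (MvPowerSeries (Fin 2) ℂ))) ^ k ≤
      Ideal.span ({X 0, X 1} : Set (MvPowerSeries (Fin 2) ℂ)) * jacobianIdeal g ⊔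
        Ideal.span ({g} : Set (MvPowerSeries (Fin 2) ℂ)) :=
  determinacy_criterion_stable_general k f g hdet hg
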